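/- Let N ≥ 2 be an integer and y : ℤ/Nℤ → ℂ a function with y(−a) = y(a) for all a. For each positive divisor d of N, choose a set T_d ⊆ (ℤ/N_dℤ)^× of representatives for the quotient (ℤ/N_dℤ)^×/{±1}. Then det(C_N·Y_N) = ∏_{d | N} det(G_d), where G_d is the square matrix indexed by u, v ∈ T_d whose (u,v)-entry is d·ŷ_d(u·v^{−1}). -/

import Mathlib

/-- The discrete cosine matrix `C_N`, of size `(N⁺+1) × (N⁺+1)` with `N⁺ = ⌊N/2⌋`. -/
noncomputable def cosMatrix (N : ℕ) : Matrix (Fin (N / 2 + 1)) (Fin (N / 2 + 1)) ℝ :=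
  Matrix.of fun m n =>
    (if (n : ℕ) = 0 ∨ (N % 2 = 0 ∧ (n : ℕ) = N / 2) then (1 / 2 : ℝ) else 1) *
      Real.cos (2 * Real.pi * (m : ℕ) * (n : ℕ) / N)

/-- The matrix `Y_N` attached to an even function `y : ℤ/Nℤ → ℂ`. -/
def YMat (N : ℕ) (y : ZMod N → ℂ) : Matrix (Fin (N / 2 + 1)) (Fin (N / 2 + 1)) ℂ :=
  Matrix.of fun i j => y (((i : ℕ) : ZMod N) * ((j : ℕ) : ZMod N))

/-- `ŷ_d(t) = (1/2)·Σ_{r=1}^{N_d} y(dr mod N)·cos(2πtr/N_d)`, where `N_d = N/d`. -/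
noncomputable def yhat (N d : ℕ) (y : ZMod N → ℂ) (t : ZMod (N / d)) : ℂ :=
  (1 / 2 : ℂ) * ∑ r ∈ Finset.Icc 1 (N / d),
    y (((d * r : ℕ) : ZMod N)) *
      (Real.cos (2 * Real.pi * (ZMod.val t) * r / ((N / d : ℕ) : ℝ)) : ℝ)

/-!
Write `M = C_N · Y_N`. Folding the half-weighted sum over `n ≤ N/2` into a full sum over
`n < N` (using that `y` is even) and splitting `n` modulo `N/d` shows that, for `d = gcd(j, N)`
and `j = d·j'`, the entry `M i j` vanishes unless `d ∣ i`, and then equals `d·ŷ_d((i/d)·j'⁻¹)`;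
the inner sum over the `d` lifts of a residue is a sum of `d`-th roots of unity. Hence `M` is
block triangular for the order of decreasing `gcd(i, N)`, and `det M` is the product of the
diagonal blocks `{i ≤ N/2 : gcd(i, N) = d}`. Through `i ↦ i/d` these indices are the units of
`ℤ/(N/d)ℤ` up to sign, i.e. `T_d`, and as `ŷ_d` is even the block is `G_d` up to this reindexing.
-/

open Finset
open scoped Real

theorem IsPrimitiveRoot.sum_range_pow_pow {R : Type*} [CommRing R] [IsDomain R] {ζ : R} {d : ℕ}
    (hζ : IsPrimitiveRoot ζ d) (m : ℕ) :
    ∑ q ∈ range d, (ζ ^ m) ^ q = if d ∣ m then (d : R) else 0 := by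
  split_ifs with h
  · simp [(hζ.pow_eq_one_iff_dvd m).2 h]
  · have hne : ζ ^ m - 1 ≠ 0 := sub_ne_zero.2 fun h1 => h ((hζ.pow_eq_one_iff_dvd m).1 h1)
    have hgeom := mul_geom_sum (ζ ^ m) d
    rw [pow_right_comm, hζ.pow_eq_one, one_pow, sub_self] at hgeom
    exact (mul_eq_zero.1 hgeom).resolve_left hne

theorem Real.sum_range_cos_add_two_pi_mul_div {d : ℕ} (hd : d ≠ 0) (m : ℕ) (θ : ℝ) :
    ∑ q ∈ range d, Real.cos (θ + 2 * π * m * q / d) =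
      if d ∣ m then d * Real.cos θ else 0 := by
  set ζ := Complex.exp (2 * π * Complex.I / d)
  have hterm (q : ℕ) : Real.cos (θ + 2 * π * m * q / d) =
      (Complex.exp (θ * Complex.I) * (ζ ^ m) ^ q).re := by
    rw [← Complex.exp_ofReal_mul_I_re, ← pow_mul, ← Complex.exp_nat_mul, ← Complex.exp_add]
    push_cast
    ring_nf
  simp_rw [hterm]
  rw [← Complex.re_sum, ← mul_sum, (Complex.isPrimitiveRoot_exp d hd).sum_range_pow_pow]
  split_ifs
  · rw [← Complex.ofReal_natCast, Complex.re_mul_ofReal, Complex.exp_ofReal_mul_I_re, mul_comm]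
  · simp

lemma sum_range_half_weighted_eq {K : Type*} [Field K] [CharZero K] {N : ℕ} (hN : 0 < N)
    (f : ℕ → K) (hf : ∀ n, 1 ≤ n → n < N → f (N - n) = f n) :
    ∑ n ∈ range (N / 2 + 1), (if n = 0 ∨ (N % 2 = 0 ∧ n = N / 2) then (1 / 2 : K) else 1) * f n =
      (1 / 2 : K) * ∑ n ∈ range N, f n := by
  have hreflect : ∑ n ∈ Ico 1 (N - N / 2), f n = ∑ n ∈ Ico (N / 2 + 1) N, f n := by
    rw [← sum_congr rfl fun n hn => hf n (mem_Ico.1 hn).1 (by grind),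
      sum_Ico_reflect _ _ (by omega), show N + 1 - (N - N / 2) = N / 2 + 1 by omega,
      Nat.add_sub_cancel]
  have hweight : ∀ n ∈ range (N / 2 + 1),
      (if n = 0 ∨ (N % 2 = 0 ∧ n = N / 2) then (1 / 2 : K) else 1) * f n =
        1 / 2 * f n + 1 / 2 * (if n ∈ Ico 1 (N - N / 2) then f n else 0) := by
    intro n hn
    simp only [mem_range, mem_Ico] at hn ⊢
    split_ifs <;> first | omega | ring
  have hsub : Ico 1 (N - N / 2) ⊆ range (N / 2 + 1) := fun n hn => by
    simp only [mem_range, mem_Ico] at hn ⊢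
    omega
  rw [sum_congr rfl hweight, sum_add_distrib, ← mul_sum, ← mul_sum, sum_ite_mem,
    inter_eq_right.2 hsub, hreflect, ← mul_add, sum_range_add_sum_Ico _ (by omega)]

lemma sum_range_mul_eq_sum_sum {M : Type*} [AddCommMonoid M] (d e : ℕ) (f : ℕ → M) :
    ∑ n ∈ range (d * e), f n = ∑ q ∈ range d, ∑ r ∈ range e, f (r + e * q) := by
  rw [← Fin.sum_univ_eq_sum_range, ← finProdFinEquiv.sum_comp, Fintype.sum_prod_type,
    ← Fin.sum_univ_eq_sum_range]
  simp only [finProdFinEquiv_apply_val, ← Fin.sum_univ_eq_sum_range (fun r => f (r + e * _))]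

lemma sum_range_natCast_eq_sum_zmod {M : Type*} [AddCommMonoid M] (e : ℕ) [NeZero e]
    (g : ZMod e → M) : ∑ r ∈ range e, g r = ∑ s : ZMod e, g s :=
  sum_nbij' (fun r => (r : ZMod e)) ZMod.val (by simp) (by simp [ZMod.val_lt])
    (fun r hr => by rw [ZMod.val_natCast, Nat.mod_eq_of_lt (mem_range.1 hr)])
    (fun s _ => ZMod.natCast_zmod_val s) (fun _ _ => rfl)

lemma sum_Icc_one_natCast_eq_sum_zmod {M : Type*} [AddCommMonoid M] (e : ℕ) [NeZero e]
    (g : ZMod e → M) : ∑ r ∈ Icc 1 e, g r = ∑ s : ZMod e, g s := by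
  have he : 0 < e := Nat.pos_of_neZero e
  rw [← sum_range_natCast_eq_sum_zmod, ← Ico_add_one_right_eq_Icc, sum_Ico_succ_top he,
    ZMod.natCast_self, range_eq_Ico, sum_eq_sum_Ico_succ_bot he, Nat.cast_zero, add_comm]

/-- `cos (2π s / e)` for `s : ℤ/eℤ`, read off the standard additive character. -/
noncomputable def zmodCos (e : ℕ) [NeZero e] (s : ZMod e) : ℝ := (ZMod.toCircle s : ℂ).re

lemma zmodCos_natCast {e : ℕ} [NeZero e] (k : ℕ) : zmodCos e k = Real.cos (2 * π * k / e) := by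
  rw [zmodCos, ZMod.toCircle_natCast, ← Complex.exp_ofReal_mul_I_re]
  push_cast
  ring_nf

lemma zmodCos_neg {e : ℕ} [NeZero e] (s : ZMod e) : zmodCos e (-s) = zmodCos e s := by
  rw [zmodCos, AddChar.map_neg_eq_inv, Circle.coe_inv_eq_conj, Complex.conj_re, zmodCos]

lemma neZero_div_of_dvd {N d : ℕ} (hN : 0 < N) (hd : d ∣ N) : NeZero (N / d) :=
  ⟨(Nat.div_pos (Nat.le_of_dvd hN hd) (Nat.pos_of_dvd_of_pos hd hN)).ne'⟩

lemma natCast_mul_val_natCast_of_dvd {N d : ℕ} (hd : d ∣ N) (k : ℕ) :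
    ((d * (k : ZMod (N / d)).val : ℕ) : ZMod N) = ((d * k : ℕ) : ZMod N) := by
  rw [ZMod.natCast_eq_natCast_iff, ZMod.val_natCast]
  simpa only [Nat.mul_div_cancel' hd] using (Nat.mod_modEq k (N / d)).mul_left' d

lemma yhat_eq_sum_zmod {N d : ℕ} [NeZero (N / d)] (hd : d ∣ N) (y : ZMod N → ℂ)
    (t : ZMod (N / d)) :
    yhat N d y t = 1 / 2 * ∑ s : ZMod (N / d),
      y ((d * s.val : ℕ) : ZMod N) * (zmodCos (N / d) (t * s) : ℂ) := by
  rw [yhat, ← sum_Icc_one_natCast_eq_sum_zmod]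
  refine congrArg _ (sum_congr rfl fun r _ => ?_)
  have hcast : t * (r : ZMod (N / d)) = ((t.val * r : ℕ) : ZMod (N / d)) := by
    rw [Nat.cast_mul, ZMod.natCast_zmod_val]
  rw [natCast_mul_val_natCast_of_dvd hd, hcast, zmodCos_natCast]
  push_cast
  ring_nf

lemma yhat_neg {N d : ℕ} [NeZero (N / d)] (hd : d ∣ N) (y : ZMod N → ℂ) (t : ZMod (N / d)) :
    yhat N d y (-t) = yhat N d y t := by
  simp only [yhat_eq_sum_zmod hd, neg_mul, zmodCos_neg]

lemma yhat_natCast_mul_inv {N d : ℕ} [NeZero (N / d)] (hd : d ∣ N) (y : ZMod N → ℂ)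
    (w : (ZMod (N / d))ˣ) (k : ℕ) :
    yhat N d y (k * ↑w⁻¹) = 1 / 2 * ∑ s : ZMod (N / d),
      y ((d * (s * w).val : ℕ) : ZMod N) * (zmodCos (N / d) (k * s) : ℂ) := by
  rw [yhat_eq_sum_zmod hd]
  refine congrArg _ (Fintype.sum_equiv (Units.mulRight w⁻¹) _ _ fun s => ?_)
  rw [Units.mulRight_apply, Units.inv_mul_cancel_right]
  ring_nf

lemma cosMatrix_mul_YMat_apply {N : ℕ} (hN : 0 < N) {y : ZMod N → ℂ}
    (hy : ∀ a, y (-a) = y a) (i j : Fin (N / 2 + 1)) :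
    ((cosMatrix N).map (fun r => (r : ℂ)) * YMat N y) i j =
      1 / 2 * ∑ n ∈ range N, (Real.cos (2 * π * (i : ℕ) * n / N) : ℂ) * y (n * (j : ℕ)) := by
  rw [← sum_range_half_weighted_eq hN, Matrix.mul_apply, ← Fin.sum_univ_eq_sum_range]
  · refine sum_congr rfl fun n _ => ?_
    simp only [cosMatrix, YMat, Matrix.map_apply, Matrix.of_apply]
    push_cast [apply_ite]
    ring
  · intro n _ hn
    have hcos : 2 * π * (i : ℕ) * ((N - n : ℕ) : ℝ) / N =
        (i : ℕ) * (2 * π) - 2 * π * (i : ℕ) * n / N := by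
      rw [Nat.cast_sub hn.le]
      field_simp
    rw [hcos, Real.cos_nat_mul_two_pi_sub, Nat.cast_sub hn.le, ZMod.natCast_self, zero_sub,
      neg_mul, hy]

lemma half_sum_cos_mul_eq_ite_yhat {N d : ℕ} (hN : 0 < N) (hd : d ∣ N) (y : ZMod N → ℂ)
    {j' : ℕ} (w : (ZMod (N / d))ˣ) (hw : (w : ZMod (N / d)) = j') (m : ℕ) :
    1 / 2 * ∑ n ∈ range N,
        (Real.cos (2 * π * m * n / N) : ℂ) * y (n * ((d * j' : ℕ) : ZMod N)) =
      if d ∣ m then d * yhat N d y (((m / d : ℕ) : ZMod (N / d)) * ↑w⁻¹) else 0 := by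
  have hde : d * (N / d) = N := Nat.mul_div_cancel' hd
  have hd0 : 0 < d := Nat.pos_of_dvd_of_pos hd hN
  have := neZero_div_of_dvd hN hd
  have hNR : (N : ℝ) = d * (N / d : ℕ) := by exact_mod_cast hde.symm
  have heR : ((N / d : ℕ) : ℝ) ≠ 0 := Nat.cast_ne_zero.2 (NeZero.ne _)
  have hterm (r q : ℕ) :
      (Real.cos (2 * π * m * ((r + N / d * q : ℕ) : ℝ) / N) : ℂ) *
          y ((r + N / d * q : ℕ) * ((d * j' : ℕ) : ZMod N)) =
        (Real.cos (2 * π * m * r / N + 2 * π * m * q / d) : ℂ) *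
          y ((d * (r * j') : ℕ) : ZMod N) := by
    have hcos : 2 * π * m * ((r + N / d * q : ℕ) : ℝ) / N =
        2 * π * m * r / N + 2 * π * m * q / d := by
      rw [hNR]
      push_cast
      field_simp
    have hmul : ((r + N / d * q : ℕ) : ZMod N) * ((d * j' : ℕ) : ZMod N) =
        ((d * (r * j') : ℕ) : ZMod N) := by
      have hN0 : ((d * (N / d) : ℕ) : ZMod N) = 0 := by rw [hde, ZMod.natCast_self]
      push_cast at hN0 ⊢
      linear_combination (q * j' : ZMod N) * hN0
    rw [hcos, hmul]
  rw [show range N = range (d * (N / d)) by rw [hde], sum_range_mul_eq_sum_sum, sum_comm]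
  simp_rw [hterm, ← sum_mul, ← Complex.ofReal_sum, Real.sum_range_cos_add_two_pi_mul_div hd0.ne']
  split_ifs with hdm
  · obtain ⟨m', rfl⟩ := hdm
    rw [Nat.mul_div_cancel_left _ hd0, yhat_natCast_mul_inv hd, ← sum_range_natCast_eq_sum_zmod,
      mul_sum, mul_sum, mul_sum]
    refine sum_congr rfl fun r _ => ?_
    rw [hw, ← Nat.cast_mul, natCast_mul_val_natCast_of_dvd hd, ← Nat.cast_mul, zmodCos_natCast]
    have hcos : 2 * π * ((d * m' : ℕ) : ℝ) * r / N = 2 * π * ((m' * r : ℕ) : ℝ) / (N / d : ℕ) := by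
      rw [hNR]
      push_cast
      field_simp
    rw [hcos]
    push_cast
    ring
  · simp

lemma cosMatrix_mul_YMat_apply_of_dvd {N : ℕ} (hN : 0 < N) {y : ZMod N → ℂ}
    (hy : ∀ a, y (-a) = y a) {d j' : ℕ} (hd : d ∣ N) (w : (ZMod (N / d))ˣ)
    (hw : (w : ZMod (N / d)) = j') (i j : Fin (N / 2 + 1)) (hj : (j : ℕ) = d * j') :
    ((cosMatrix N).map (fun r => (r : ℂ)) * YMat N y) i j =
      if d ∣ (i : ℕ) then d * yhat N d y ((((i : ℕ) / d : ℕ) : ZMod (N / d)) * ↑w⁻¹) else 0 := by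
  rw [cosMatrix_mul_YMat_apply hN hy, hj, half_sum_cos_mul_eq_ite_yhat hN hd y w hw]

lemma blockTriangular_cosMatrix_mul_YMat {N : ℕ} (hN : 0 < N) {y : ZMod N → ℂ}
    (hy : ∀ a, y (-a) = y a) :
    ((cosMatrix N).map (fun r => (r : ℂ)) * YMat N y).BlockTriangular
      fun i => OrderDual.toDual (Nat.gcd i N) := by
  intro i j hlt
  have hgcd : 0 < Nat.gcd j N := Nat.gcd_pos_of_pos_right _ hN
  rw [cosMatrix_mul_YMat_apply_of_dvd hN hy (Nat.gcd_dvd_right j N)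
    (ZMod.unitOfCoprime _ (Nat.coprime_div_gcd_div_gcd hgcd)) (ZMod.coe_unitOfCoprime _ _) i j
    (Nat.mul_div_cancel' (Nat.gcd_dvd_left j N)).symm, if_neg]
  intro hdvd
  exact (Nat.le_of_dvd (Nat.gcd_pos_of_pos_right _ hN)
    (Nat.dvd_gcd hdvd (Nat.gcd_dvd_right j N))).not_gt hlt

lemma image_gcd_eq_divisors {N : ℕ} (hN : 0 < N) :
    univ.image (fun i : Fin (N / 2 + 1) => Nat.gcd i N) = N.divisors := by
  ext d
  simp only [mem_image, mem_univ, true_and, Nat.mem_divisors]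
  constructor
  · rintro ⟨i, rfl⟩
    exact ⟨Nat.gcd_dvd_right _ _, hN.ne'⟩
  · rintro ⟨⟨k, hk⟩, -⟩
    rcases Nat.lt_or_ge k 2 with hk2 | hk2
    · interval_cases k
      · omega
      · exact ⟨0, by simp [hk]⟩
    · have hdN : d * 2 ≤ N := hk ▸ Nat.mul_le_mul_left d hk2
      exact ⟨⟨d, by omega⟩, Nat.gcd_eq_left ⟨k, hk⟩⟩

section SignRepresentative

variable {α : Type*} [InvolutiveNeg α] {T : Finset α}
  (hT : ∀ w : α, ∃! u, u ∈ T ∧ (u = w ∨ u = -w))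

noncomputable def signRep (w : α) : {u // u ∈ T} :=
  ⟨(hT w).exists.choose, (hT w).exists.choose_spec.1⟩

lemma signRep_eq_iff {w : α} {u : {u // u ∈ T}} :
    signRep hT w = u ↔ (u : α) = w ∨ (u : α) = -w := by
  refine ⟨fun h => h ▸ (hT w).exists.choose_spec.2, fun h => Subtype.ext ?_⟩
  exact (hT w).unique (hT w).exists.choose_spec ⟨u.2, h⟩

lemma bijective_signRep_comp {ι : Type*} {Φ : ι → α}
    (hinj : ∀ i j, Φ i = Φ j ∨ Φ i = -Φ j → i = j) (hsurj : ∀ w, ∃ i, Φ i = w ∨ Φ i = -w) :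
    Function.Bijective (signRep hT ∘ Φ) := by
  refine ⟨fun i j h => hinj i j ?_, fun u => ?_⟩
  · have hi := (signRep_eq_iff hT).1 (h : signRep hT (Φ i) = signRep hT (Φ j))
    have hj := (signRep_eq_iff hT).1 (rfl : signRep hT (Φ j) = _)
    rcases hi with hi | hi <;> rcases hj with hj | hj
    · exact Or.inl (hi.symm.trans hj)
    · exact Or.inr (hi.symm.trans hj)
    · exact Or.inr (neg_eq_iff_eq_neg.1 (hi.symm.trans hj))
    · exact Or.inl (neg_inj.1 (hi.symm.trans hj))
  · obtain ⟨i, hi⟩ := hsurj u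
    refine ⟨i, (signRep_eq_iff hT).2 ?_⟩
    rcases hi with hi | hi
    · exact Or.inl hi.symm
    · exact Or.inr (by rw [hi, neg_neg])

end SignRepresentative

lemma mul_inv_eq_or_eq_neg {G : Type*} [Group G] [HasDistribNeg G] {a b u v : G}
    (hu : u = a ∨ u = -a) (hv : v = b ∨ v = -b) : u * v⁻¹ = a * b⁻¹ ∨ u * v⁻¹ = -(a * b⁻¹) := by
  rcases hu with rfl | rfl <;> rcases hv with rfl | rfl <;> simp [inv_neg]

lemma Nat.coprime_div_of_gcd_eq {i N d : ℕ} (hN : 0 < N) (h : Nat.gcd i N = d) :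
    Nat.Coprime (i / d) (N / d) := by
  subst h
  exact Nat.coprime_div_gcd_div_gcd (Nat.gcd_pos_of_pos_right _ hN)

section GcdBlock

open OrderDual

/-- The indices `i ≤ N/2` with `gcd(i, N) = d`, in the form `Matrix.toSquareBlock` produces for
the order by decreasing `gcd(i, N)`. -/
abbrev GcdBlock (N d : ℕ) : Type := {i : Fin (N / 2 + 1) // toDual (Nat.gcd i N) = toDual d}

variable {N : ℕ} (hN : 0 < N) (d : ℕ)

lemma dvd_of_mem_gcdBlock (i : GcdBlock N d) : d ∣ (i : ℕ) :=
  (toDual_inj.1 i.2).symm.dvd.trans (Nat.gcd_dvd_left _ _)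

noncomputable def gcdBlockUnit (i : GcdBlock N d) : (ZMod (N / d))ˣ :=
  ZMod.unitOfCoprime ((i : ℕ) / d) (Nat.coprime_div_of_gcd_eq hN (toDual_inj.1 i.2))

lemma val_gcdBlockUnit (i : GcdBlock N d) :
    (gcdBlockUnit hN d i : ZMod (N / d)) = (((i : ℕ) / d : ℕ) : ZMod (N / d)) :=
  ZMod.coe_unitOfCoprime _ _

lemma eq_of_gcdBlockUnit_eq_or_eq_neg (i j : GcdBlock N d)
    (h : gcdBlockUnit hN d i = gcdBlockUnit hN d j ∨ gcdBlockUnit hN d i = -gcdBlockUnit hN d j) :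
    i = j := by
  have hval : (((i : ℕ) / d : ℕ) : ZMod (N / d)) = (((j : ℕ) / d : ℕ) : ZMod (N / d)) ∨
      (((i : ℕ) / d : ℕ) : ZMod (N / d)) = -(((j : ℕ) / d : ℕ) : ZMod (N / d)) := by
    simpa only [Units.ext_iff, Units.val_neg, val_gcdBlockUnit] using h
  have hle (i : GcdBlock N d) : (i : ℕ) / d ≤ N / d / 2 := by
    rw [Nat.div_div_eq_div_mul, mul_comm, ← Nat.div_div_eq_div_mul]
    exact Nat.div_le_div_right (Nat.lt_succ_iff.1 (i : Fin (N / 2 + 1)).2)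
  have hdiv := ZMod.natAbs_valMinAbs_eq_natAbs_valMinAbs.2 hval
  rw [ZMod.valMinAbs_natCast_of_le_half (hle i), ZMod.valMinAbs_natCast_of_le_half (hle j),
    Int.natAbs_natCast, Int.natAbs_natCast] at hdiv
  refine Subtype.ext (Fin.ext ?_)
  rw [← Nat.div_mul_cancel (dvd_of_mem_gcdBlock d i), hdiv,
    Nat.div_mul_cancel (dvd_of_mem_gcdBlock d j)]

lemma exists_gcdBlockUnit_eq_or_eq_neg (hd : d ∣ N) (w : (ZMod (N / d))ˣ) :
    ∃ i, gcdBlockUnit hN d i = w ∨ gcdBlockUnit hN d i = -w := by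
  have hd0 : 0 < d := Nat.pos_of_dvd_of_pos hd hN
  have hde : d * (N / d) = N := Nat.mul_div_cancel' hd
  have := neZero_div_of_dvd hN hd
  set x := (w : ZMod (N / d)).valMinAbs.natAbs
  have hxw : (x : ZMod (N / d)) = w ∨ (x : ZMod (N / d)) = -w := by
    rw [ZMod.natCast_natAbs_valMinAbs]
    split_ifs
    exacts [Or.inl rfl, Or.inr rfl]
  have hcop : Nat.Coprime x (N / d) := by
    refine (ZMod.isUnit_iff_coprime x _).1 ?_
    rcases hxw with h | h <;> rw [h]
    exacts [w.isUnit, w.isUnit.neg]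
  have hxN : d * x ≤ N / 2 :=
    calc d * x ≤ d * (N / d / 2) := Nat.mul_le_mul_left d (ZMod.natAbs_valMinAbs_le _)
      _ ≤ d * (N / d) / 2 := Nat.mul_div_le_mul_div_assoc _ _ _
      _ = N / 2 := by rw [hde]
  have hgcd : Nat.gcd (d * x) N = d := by
    conv_lhs => rw [← hde]
    rw [Nat.gcd_mul_left, hcop.gcd_eq_one, mul_one]
  refine ⟨⟨⟨d * x, by omega⟩, congrArg toDual hgcd⟩, ?_⟩
  simpa only [Units.ext_iff, Units.val_neg, val_gcdBlockUnit, Nat.mul_div_cancel_left x hd0]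
    using hxw

noncomputable def gcdBlockEquiv (hd : d ∣ N) {T : Finset (ZMod (N / d))ˣ}
    (hT : ∀ w, ∃! u, u ∈ T ∧ (u = w ∨ u = -w)) : GcdBlock N d ≃ {u // u ∈ T} :=
  Equiv.ofBijective _ (bijective_signRep_comp hT (eq_of_gcdBlockUnit_eq_or_eq_neg hN d)
    (exists_gcdBlockUnit_eq_or_eq_neg hN d hd))

lemma toSquareBlock_cosMatrix_mul_YMat {y : ZMod N → ℂ} (hy : ∀ a, y (-a) = y a) (hd : d ∣ N)
    {T : Finset (ZMod (N / d))ˣ} (hT : ∀ w, ∃! u, u ∈ T ∧ (u = w ∨ u = -w)) :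
    ((cosMatrix N).map (fun r => (r : ℂ)) * YMat N y).toSquareBlock
        (fun i => toDual (Nat.gcd i N)) (toDual d) =
      (Matrix.of fun u v : {u // u ∈ T} => (d : ℂ) * yhat N d y
          (((u : (ZMod (N / d))ˣ) * (v : (ZMod (N / d))ˣ)⁻¹ : (ZMod (N / d))ˣ) : ZMod (N / d))
        ).submatrix (gcdBlockEquiv hN d hd hT) (gcdBlockEquiv hN d hd hT) := by
  have := neZero_div_of_dvd hN hd
  ext i j
  rw [Matrix.toSquareBlock_def, Matrix.of_apply, Matrix.submatrix_apply, Matrix.of_apply,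
    cosMatrix_mul_YMat_apply_of_dvd hN hy hd (gcdBlockUnit hN d j) (val_gcdBlockUnit hN d j) i j
      (Nat.mul_div_cancel' (dvd_of_mem_gcdBlock d j)).symm,
    if_pos (dvd_of_mem_gcdBlock d i), ← val_gcdBlockUnit hN d i, ← Units.val_mul]
  rcases mul_inv_eq_or_eq_neg ((signRep_eq_iff hT).1 rfl) ((signRep_eq_iff hT).1 rfl) with h | h
  · exact congrArg (fun u : (ZMod (N / d))ˣ => (d : ℂ) * yhat N d y u) h.symm
  · rw [show gcdBlockEquiv hN d hd hT i = signRep hT (gcdBlockUnit hN d i) from rfl,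
      show gcdBlockEquiv hN d hd hT j = signRep hT (gcdBlockUnit hN d j) from rfl, h,
      Units.val_neg, yhat_neg hd]

end GcdBlock

/-- `det(C_N·Y_N) = ∏_{d ∣ N} det G_d`, where for each positive divisor `d` of `N`
and a chosen set `T_d ⊆ (ℤ/N_dℤ)ˣ` of representatives of `(ℤ/N_dℤ)ˣ/{±1}`,
`G_d` is the matrix indexed by `u, v ∈ T_d` with `(u,v)` entry `d·ŷ_d(u·v⁻¹)`. -/
theorem det_cosMatrix_mul_YMat (N : ℕ) (hN : 2 ≤ N) (y : ZMod N → ℂ)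
    (hy : ∀ a : ZMod N, y (-a) = y a)
    (T : (d : ℕ) → Finset (ZMod (N / d))ˣ)
    (hT : ∀ d ∈ N.divisors, ∀ w : (ZMod (N / d))ˣ,
      ∃! u : (ZMod (N / d))ˣ, u ∈ T d ∧ (u = w ∨ u = -w)) :
    ((cosMatrix N).map (fun r => (r : ℂ)) * YMat N y).det =
      ∏ d ∈ N.divisors,
        Matrix.det (Matrix.of fun u v : {u : (ZMod (N / d))ˣ // u ∈ T d} =>
          (d : ℂ) * yhat N d y (((u : (ZMod (N / d))ˣ) * (v : (ZMod (N / d))ˣ)⁻¹ :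
            (ZMod (N / d))ˣ) : ZMod (N / d))) := by
  have hN0 : 0 < N := by omega
  have himage : univ.image (fun i : Fin (N / 2 + 1) => OrderDual.toDual (Nat.gcd i N)) =
      N.divisors.image OrderDual.toDual := by
    rw [← image_gcd_eq_divisors hN0, image_image]
    rfl
  rw [(blockTriangular_cosMatrix_mul_YMat hN0 hy).det, himage,
    prod_image fun _ _ _ _ h => OrderDual.toDual.injective h]
  refine prod_congr rfl fun d hd => ?_
  rw [toSquareBlock_cosMatrix_mul_YMat hN0 d hy (Nat.dvd_of_mem_divisors hd) (hT d hd),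
    Matrix.det_submatrix_equiv_self]
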